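/- arXiv:2511.04945 — 5 statements merged into one kernel-verified Lean document; each statement's English description precedes it below -/
import Mathlib

section
/- For any real r with 0 < r ≤ 1, the function f(x) = arcsin(√r · sin x) is concave on the interval [0, π/2]. -/
open Real Set

/-
On `(-π/2, π/2)` the derivative of `x ↦ arcsin (a sin x)` is `a cos x / √(1 - a² sin² x)`; dividing
by `cos x` turns it into `a / √(1 + (1 - a²) tan² x)`, which for `0 ≤ a ≤ 1` visibly decreases as
`x` increases on `[0, π/2)`. A function with antitone derivative is concave.
-/

lemma one_sub_sq_mul_sin_sq_eq (a : ℝ) {x : ℝ} (hx : cos x ≠ 0) :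
    1 - a ^ 2 * sin x ^ 2 = cos x ^ 2 * (1 + (1 - a ^ 2) * tan x ^ 2) := by
  rw [tan_eq_sin_div_cos]
  field_simp
  linear_combination (sin_sq_add_cos_sq x).symm

lemma hasDerivAt_arcsin_mul_sin {a x : ℝ} (ha : |a| ≤ 1) (hx : x ∈ Ioo (-(π / 2)) (π / 2)) :
    HasDerivAt (fun x => arcsin (a * sin x)) (a / √(1 + (1 - a ^ 2) * tan x ^ 2)) x := by
  have hcos : 0 < cos x := cos_pos_of_mem_Ioo hx
  have hsin : |sin x| < 1 := by
    rw [← sq_lt_one_iff_abs_lt_one]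
    nlinarith [sin_sq_add_cos_sq x]
  have hlt : |a * sin x| < 1 := by
    rw [abs_mul]
    exact lt_of_le_of_lt (mul_le_of_le_one_left (abs_nonneg _) ha) hsin
  obtain ⟨hlo, hhi⟩ := abs_lt.mp hlt
  refine ((hasDerivAt_arcsin hlo.ne' hhi.ne).comp x ((hasDerivAt_sin x).const_mul a)).congr_deriv ?_
  rw [mul_pow, one_sub_sq_mul_sin_sq_eq a hcos.ne', sqrt_mul (sq_nonneg _), sqrt_sq hcos.le]
  field_simp

lemma antitoneOn_div_sqrt_one_add_mul_tan_sq {a b : ℝ} (ha : 0 ≤ a) (hb : 0 ≤ b) :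
    AntitoneOn (fun x => a / √(1 + b * tan x ^ 2)) (Ico 0 (π / 2)) := by
  intro x hx y hy hxy
  have htan : tan x ≤ tan y :=
    strictMonoOn_tan.monotoneOn ⟨by linarith [hx.1, pi_pos], hx.2⟩
      ⟨by linarith [hy.1, pi_pos], hy.2⟩ hxy
  have htan0 : 0 ≤ tan x := tan_nonneg_of_nonneg_of_le_pi_div_two hx.1 hx.2.le
  dsimp only
  gcongr

lemma concaveOn_arcsin_mul_sin {a : ℝ} (ha0 : 0 ≤ a) (ha1 : a ≤ 1) :
    ConcaveOn ℝ (Icc 0 (π / 2)) (fun x => arcsin (a * sin x)) := by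
  have hderiv : ∀ x ∈ Ioo 0 (π / 2),
      HasDerivAt (fun x => arcsin (a * sin x)) (a / √(1 + (1 - a ^ 2) * tan x ^ 2)) x :=
    fun x hx => hasDerivAt_arcsin_mul_sin (abs_le.mpr ⟨by linarith, ha1⟩)
      ⟨by linarith [hx.1, pi_pos], hx.2⟩
  refine AntitoneOn.concaveOn_of_deriv (convex_Icc _ _) (by fun_prop) ?_ ?_ <;>
    rw [interior_Icc]
  · exact fun x hx => (hderiv x hx).differentiableAt.differentiableWithinAt
  · refine ((antitoneOn_div_sqrt_one_add_mul_tan_sq ha0 ?_).mono Ioo_subset_Ico_self).congr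
      fun x hx => (hderiv x hx).deriv.symm
    nlinarith

theorem arcsin_sqrt_mul_sin_concaveOn_general (r : ℝ) (hr1 : r ≤ 1) :
    ConcaveOn ℝ (Set.Icc 0 (π / 2))
      (fun x : ℝ => Real.arcsin (Real.sqrt r * Real.sin x)) :=
  concaveOn_arcsin_mul_sin (sqrt_nonneg r) (sqrt_le_one.mpr hr1)

theorem arcsin_sqrt_mul_sin_concaveOn (r : ℝ) (hr0 : 0 < r) (hr1 : r ≤ 1) :
    ConcaveOn ℝ (Set.Icc 0 (π / 2))
      (fun x : ℝ => Real.arcsin (Real.sqrt r * Real.sin x)) :=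
  arcsin_sqrt_mul_sin_concaveOn_general r hr1
end

section
/- Let K ≥ 1 be an odd integer and let r be a real number with sin²(π/2 · (1 - 1/K)) < r ≤ 1. Then for every θ with 0 ≤ θ < π/2, we have 0 ≤ (2Kθ)/π - (2K · arcsin(√r · sin θ))/π < 1. -/
/-!
With `c = π / (2K)` the lower bound on `r` reads `cos c < √r`, and the claim becomes
`0 ≤ θ - arcsin (√r sin θ) < c`. The left inequality is monotonicity of `arcsin`; the right one
follows from `sin (θ - c) = sin θ cos c - cos θ sin c < √r sin θ`.
-/

open Real

namespace Real

theorem arcsin_mul_sin_le {a θ : ℝ} (ha1 : a ≤ 1) (hθ0 : 0 ≤ θ) (hθ : θ ≤ π / 2) :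
    arcsin (a * sin θ) ≤ θ := by
  have hsin : 0 ≤ sin θ := sin_nonneg_of_nonneg_of_le_pi hθ0 (by linarith [pi_pos])
  calc arcsin (a * sin θ) ≤ arcsin (sin θ) :=
        arcsin_le_arcsin (mul_le_of_le_one_left hsin ha1)
    _ = θ := arcsin_sin (by linarith [pi_pos]) hθ

theorem sub_lt_arcsin_mul_sin {a c θ : ℝ} (hc0 : 0 < c) (hc : c ≤ π / 2) (ha : cos c < a)
    (hθ0 : 0 ≤ θ) (hθ : θ ≤ π / 2) : θ - c < arcsin (a * sin θ) := by
  rw [lt_arcsin_iff_sin_lt' ⟨by linarith, by linarith⟩, sin_sub]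
  have hcosθ : 0 ≤ cos θ := cos_nonneg_of_mem_Icc ⟨by linarith [pi_pos], hθ⟩
  have hsinc : 0 < sin c := sin_pos_of_pos_of_lt_pi hc0 (by linarith [pi_pos])
  rcases hθ0.eq_or_lt with rfl | hθpos
  · simpa using hsinc
  · have hsinθ : 0 < sin θ := sin_pos_of_pos_of_lt_pi hθpos (by linarith [pi_pos])
    nlinarith [mul_pos hsinθ (sub_pos.2 ha), mul_nonneg hcosθ hsinc.le]

end Real

theorem scaled_angle_diff_bound_general (K : ℤ) (hK1 : 1 ≤ K) (r : ℝ)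
    (hr_lb : Real.sin (π / 2 * (1 - 1 / (K : ℝ))) ^ 2 < r) (hr1 : r ≤ 1)
    (θ : ℝ) (hθ0 : 0 ≤ θ) (hθ : θ < π / 2) :
    0 ≤ 2 * (K : ℝ) * θ / π - 2 * (K : ℝ) * Real.arcsin (Real.sqrt r * Real.sin θ) / π ∧
      2 * (K : ℝ) * θ / π - 2 * (K : ℝ) * Real.arcsin (Real.sqrt r * Real.sin θ) / π < 1 := by
  have hK : (1 : ℝ) ≤ K := by exact_mod_cast hK1
  set c := π / (2 * (K : ℝ)) with hc
  have hc0 : 0 < c := by positivity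
  have hcπ : c ≤ π / 2 := div_le_div_of_nonneg_left pi_pos.le two_pos (by linarith)
  have hcos : cos c < √r := by
    have hcos0 : 0 ≤ cos c := cos_nonneg_of_mem_Icc ⟨by linarith, hcπ⟩
    rwa [show π / 2 * (1 - 1 / (K : ℝ)) = π / 2 - c by rw [hc]; field_simp, sin_pi_div_two_sub,
      ← lt_sqrt hcos0] at hr_lb
  have hdiff : 2 * (K : ℝ) * θ / π - 2 * (K : ℝ) * arcsin (√r * sin θ) / π
      = (θ - arcsin (√r * sin θ)) / c := by
    rw [hc]; field_simp
  rw [hdiff]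
  exact ⟨div_nonneg (sub_nonneg.2 (arcsin_mul_sin_le (sqrt_le_one.2 hr1) hθ0 hθ.le)) hc0.le,
    (div_lt_one hc0).2 (by linarith [sub_lt_arcsin_mul_sin hc0 hcπ hcos hθ0 hθ.le])⟩

theorem scaled_angle_diff_bound (K : ℤ) (hK1 : 1 ≤ K) (hKodd : Odd K) (r : ℝ)
    (hr_lb : Real.sin (π / 2 * (1 - 1 / (K : ℝ))) ^ 2 < r) (hr1 : r ≤ 1)
    (θ : ℝ) (hθ0 : 0 ≤ θ) (hθ : θ < π / 2) :
    0 ≤ 2 * (K : ℝ) * θ / π - 2 * (K : ℝ) * Real.arcsin (Real.sqrt r * Real.sin θ) / π ∧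
      2 * (K : ℝ) * θ / π - 2 * (K : ℝ) * Real.arcsin (Real.sqrt r * Real.sin θ) / π < 1 :=
  scaled_angle_diff_bound_general K hK1 r hr_lb hr1 θ hθ0 hθ
end

section
/- Suppose the true angle θ_a ∈ [θ_l, θ_u] ⊆ [0, π/2] and K is a positive odd integer with ⌊2Kθ_l/π⌋ = ⌈2Kθ_u/π⌉ - 1 and the quadrant count R = ⌊2Kθ_l/π⌋ even. If a_min ≤ sin²(Kθ_a) ≤ a_max with 0 ≤ a_min ≤ a_max ≤ 1, then θ_a lies in the interval [(R·π/2 + arcsin√a_min)/K, (R·π/2 + arcsin√a_max)/K] ∩ [θ_l, θ_u]. -/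
/-! On `[θl, θu]` the angle `Kθ` stays in the single quadrant `[Rπ/2, (R+1)π/2]`, so
`Kθa = Rπ/2 + γ` with `γ ∈ [0, π/2]`. Since `R` is even, `Rπ/2` is a multiple of `π` and
`sin²(Kθa) = sin² γ`; on `[0, π/2]` the map `γ ↦ sin² γ` is inverted by `a ↦ arcsin √a`,
which is monotone, so the bounds on `sin²(Kθa)` become bounds on `γ`. -/

open Real Set

theorem sin_sq_add_int_mul_pi (x : ℝ) (n : ℤ) : sin (x + n * π) ^ 2 = sin x ^ 2 := by
  rw [sin_add_int_mul_pi, mul_pow, ← zpow_natCast, ← zpow_mul,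
    Even.neg_one_zpow ⟨n, by push_cast; ring⟩, one_mul]

theorem arcsin_sqrt_sin_sq {γ : ℝ} (h₀ : 0 ≤ γ) (h₁ : γ ≤ π / 2) : arcsin √(sin γ ^ 2) = γ := by
  rw [sqrt_sq (sin_nonneg_of_nonneg_of_le_pi h₀ (by linarith [pi_pos])),
    arcsin_sin (by linarith) h₁]

theorem mem_Icc_floor_of_floor_eq_ceil_sub_one {x y z : ℝ} (h : ⌊x⌋ = ⌈y⌉ - 1)
    (hxz : x ≤ z) (hzy : z ≤ y) : z ∈ Icc (⌊x⌋ : ℝ) (⌊x⌋ + 1) := by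
  have hy : y ≤ (⌊x⌋ : ℝ) + 1 := by
    rw [h]; push_cast; linarith [Int.le_ceil y]
  exact ⟨(Int.floor_le x).trans hxz, hzy.trans hy⟩

theorem sub_mul_pi_div_two_mem_Icc {x : ℝ} {R : ℤ} (hx : 2 * x / π ∈ Icc (R : ℝ) (R + 1)) :
    x - R * π / 2 ∈ Icc 0 (π / 2) := by
  obtain ⟨hlo, hhi⟩ := hx
  rw [le_div_iff₀ pi_pos] at hlo
  rw [div_le_iff₀ pi_pos] at hhi
  constructor <;> linarith

theorem even_quadrant_confidence_interval_general (θa θl θu : ℝ) (K : ℤ) (hK1 : 1 ≤ K)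
    (hal : θl ≤ θa) (hau : θa ≤ θu)
    (hcond : ⌊2 * (K : ℝ) * θl / π⌋ = ⌈2 * (K : ℝ) * θu / π⌉ - 1)
    (R : ℤ) (hR : R = ⌊2 * (K : ℝ) * θl / π⌋) (hReven : Even R)
    (amin amax : ℝ)
    (hlo : amin ≤ Real.sin ((K : ℝ) * θa) ^ 2) (hhi : Real.sin ((K : ℝ) * θa) ^ 2 ≤ amax) :
    θa ∈ Set.Icc (((R : ℝ) * π / 2 + Real.arcsin (Real.sqrt amin)) / (K : ℝ))
        (((R : ℝ) * π / 2 + Real.arcsin (Real.sqrt amax)) / (K : ℝ)) ∩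
      Set.Icc θl θu := by
  have hK : (0 : ℝ) < K := by exact_mod_cast hK1
  have hquadrant : 2 * (K * θa) / π ∈ Icc (R : ℝ) (R + 1) := by
    rw [hR, ← mul_assoc]
    exact mem_Icc_floor_of_floor_eq_ceil_sub_one hcond (by gcongr) (by gcongr)
  obtain ⟨hγ₀, hγ₁⟩ := sub_mul_pi_div_two_mem_Icc hquadrant
  set γ := K * θa - R * π / 2 with hγ
  have hsin : sin (K * θa) ^ 2 = sin γ ^ 2 := by
    obtain ⟨m, hm⟩ := hReven
    rw [← sin_sq_add_int_mul_pi γ m]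
    have hR2 : (R : ℝ) = 2 * m := by rw [hm]; push_cast; ring
    congr 2
    rw [hγ, hR2]; ring
  have hmin : arcsin √amin ≤ γ :=
    arcsin_sqrt_sin_sq hγ₀ hγ₁ ▸ arcsin_le_arcsin (sqrt_le_sqrt (hsin ▸ hlo))
  have hmax : γ ≤ arcsin √amax :=
    arcsin_sqrt_sin_sq hγ₀ hγ₁ ▸ arcsin_le_arcsin (sqrt_le_sqrt (hsin ▸ hhi))
  refine ⟨⟨?_, ?_⟩, hal, hau⟩
  · rw [div_le_iff₀ hK]; linarith [hγ]
  · rw [le_div_iff₀ hK]; linarith [hγ]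

theorem even_quadrant_confidence_interval (θa θl θu : ℝ) (K : ℤ) (hK1 : 1 ≤ K) (hKodd : Odd K)
    (h0 : 0 ≤ θl) (hal : θl ≤ θa) (hau : θa ≤ θu) (hu : θu ≤ π / 2)
    (hcond : ⌊2 * (K : ℝ) * θl / π⌋ = ⌈2 * (K : ℝ) * θu / π⌉ - 1)
    (R : ℤ) (hR : R = ⌊2 * (K : ℝ) * θl / π⌋) (hReven : Even R)
    (amin amax : ℝ) (h0a : 0 ≤ amin) (haa : amin ≤ amax) (ha1 : amax ≤ 1)
    (hlo : amin ≤ Real.sin ((K : ℝ) * θa) ^ 2) (hhi : Real.sin ((K : ℝ) * θa) ^ 2 ≤ amax) :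
    θa ∈ Set.Icc (((R : ℝ) * π / 2 + Real.arcsin (Real.sqrt amin)) / (K : ℝ))
        (((R : ℝ) * π / 2 + Real.arcsin (Real.sqrt amax)) / (K : ℝ)) ∩
      Set.Icc θl θu :=
  even_quadrant_confidence_interval_general θa θl θu K hK1 hal hau hcond R hR hReven amin amax hlo
    hhi
end

section
/- For all θ ∈ [0, π/2] and all ε_θ with 0 ≤ ε_θ ≤ min(½·arcsin(sin(π/21)·sin(8π/21)/sin(2θ)) [interpreted as π/2 when sin(2θ)=0], π/2 - θ, θ), there exists an odd integer m ∈ {3, 5, 7} such that the interval [θ - ε_θ, θ + ε_θ] is contained in a single interval of the form [(p-1)π/(2m), pπ/(2m)] for some integer p with 1 ≤ p ≤ m. -/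
/-!
Whenever `sin (2θ) ≠ 0`, the bound on `ε` says `sin (2ε) sin (2θ) ≤ sin (π/21) sin (8π/21)`, so `ε`
is at most every distance `d ≤ π/4` from `θ` to a point with
`sin (π/21) sin (8π/21) ≤ sin (2d) sin (2θ)`. As `2 sin x sin y = cos (y - x) - cos (x + y)`,
the product `sin (2d) sin (2θ)` for `d` the distance to a fixed endpoint is monotone in `θ`
on the relevant range, so it suffices to check it at the ends of the `θ`-range assigned to a
cell. By the symmetry `θ ↦ π/2 - θ` only `θ ≤ π/4` matters, which is covered by the cells
`[0, π/6]`, `[π/10, π/5]`, `[π/7, 3π/14]`, `[π/6, π/3]` on the ranges cut at `2π/15`, `6π/35`,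
`4π/21`; at each cut both neighbouring cells give the same product, and at `4π/21` it is
exactly `sin (π/21) sin (8π/21)`.
-/

open Real Set

def LiesInSubdivisionCell (M : Set ℕ) (I : Set ℝ) : Prop :=
  ∃ m ∈ M, ∃ p : ℕ, 1 ≤ p ∧ p ≤ m ∧
    I ⊆ Icc (((p : ℝ) - 1) * π / (2 * m)) ((p : ℝ) * π / (2 * m))

-- `x ↦ π/2 - x` maps the cell with index `p` onto the one with index `m + 1 - p`.
lemma LiesInSubdivisionCell.reflect {M : Set ℕ} {a b : ℝ}
    (h : LiesInSubdivisionCell M (Icc a b)) :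
    LiesInSubdivisionCell M (Icc (π / 2 - b) (π / 2 - a)) := by
  obtain ⟨m, hm, p, hp, hpm, hsub⟩ := h
  refine ⟨m, hm, m + 1 - p, by omega, by omega, fun x hx => ?_⟩
  obtain ⟨hlo, hhi⟩ := hsub (show π / 2 - x ∈ Icc a b from ⟨by linarith [hx.2], by linarith [hx.1]⟩)
  have hm0 : (m : ℝ) ≠ 0 := by norm_cast; omega
  have hcast : ((m + 1 - p : ℕ) : ℝ) = m + 1 - p := by
    rw [Nat.cast_sub (by omega)]; push_cast; ring
  have hlo' : ((m + 1 - p : ℕ) - 1 : ℝ) * π / (2 * m) = π / 2 - p * π / (2 * m) := by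
    rw [hcast]; field_simp; ring
  have hhi' : ((m + 1 - p : ℕ) : ℝ) * π / (2 * m) = π / 2 - (p - 1) * π / (2 * m) := by
    rw [hcast]; field_simp; ring
  rw [hlo', hhi']
  constructor <;> linarith

lemma le_of_sin_le_sin {a b : ℝ} (ha : a ≤ π / 2) (hb : -(π / 2) ≤ b) (h : sin a ≤ sin b) :
    a ≤ b := by
  by_contra! hba
  exact (sin_lt_sin_of_lt_of_le_pi_div_two hb ha hba).not_ge h

-- `2 sin x sin y = cos (y - x) - cos (x + y)`, and `cos` is antitone on `[0, π]`.
lemma sin_mul_sin_le_sin_mul_sin {x y x₀ y₀ : ℝ} (hxy : x ≤ y) (hdiff : y - x ≤ y₀ - x₀)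
    (hdiff₀ : y₀ - x₀ ≤ π) (hsum₀ : 0 ≤ x₀ + y₀) (hsum : x₀ + y₀ ≤ x + y) (hsumπ : x + y ≤ π) :
    sin x₀ * sin y₀ ≤ sin x * sin y := by
  have h₀ := two_mul_sin_mul_sin y₀ x₀
  have h := two_mul_sin_mul_sin y x
  have hcos_diff : cos (y₀ - x₀) ≤ cos (y - x) :=
    cos_le_cos_of_nonneg_of_le_pi (by linarith) hdiff₀ hdiff
  have hcos_sum : cos (x + y) ≤ cos (x₀ + y₀) :=
    cos_le_cos_of_nonneg_of_le_pi hsum₀ hsumπ hsum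
  rw [add_comm y₀, add_comm y] at *
  nlinarith

lemma sin_two_mul_mul_le_of_le_arcsin {ε s z : ℝ} (hz : 0 < z) (hε : 0 ≤ ε)
    (h : ε ≤ 1 / 2 * arcsin (s / z)) : sin (2 * ε) * z ≤ s := by
  rw [← le_div_iff₀ hz, ← le_arcsin_iff_sin_le' ⟨by linarith [pi_pos], by
    linarith [arcsin_le_pi_div_two (s / z)]⟩]
  linarith

lemma le_sub_of_sin_two_mul_mul_le {s θ ε L θ₀ : ℝ} (hz : 0 < sin (2 * θ))
    (hε : sin (2 * ε) * sin (2 * θ) ≤ s) (hεπ : ε ≤ π / 4) (hL : 0 ≤ L) (hLθ₀ : L ≤ θ₀)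
    (hθ₀θ : θ₀ ≤ θ) (hθ : θ ≤ π / 4) (hs : s ≤ sin (2 * (θ₀ - L)) * sin (2 * θ₀)) :
    L ≤ θ - ε := by
  have hmono : sin (2 * (θ₀ - L)) * sin (2 * θ₀) ≤ sin (2 * (θ - L)) * sin (2 * θ) :=
    sin_mul_sin_le_sin_mul_sin (by linarith) (by linarith) (by linarith [pi_pos])
      (by linarith) (by linarith) (by linarith)
  have hsin := le_of_mul_le_mul_right (hε.trans (hs.trans hmono)) hz
  linarith [le_of_sin_le_sin (by linarith) (by linarith [pi_pos]) hsin]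

lemma add_le_of_sin_two_mul_mul_le {s θ ε U θ₁ : ℝ} (hz : 0 < sin (2 * θ))
    (hε : sin (2 * ε) * sin (2 * θ) ≤ s) (hεπ : ε ≤ π / 4) (hUθ : U ≤ 2 * θ) (hθθ₁ : θ ≤ θ₁)
    (hθ₁U : θ₁ ≤ U) (hU : U ≤ π / 2) (hs : s ≤ sin (2 * (U - θ₁)) * sin (2 * θ₁)) :
    θ + ε ≤ U := by
  have hmono : sin (2 * (U - θ₁)) * sin (2 * θ₁) ≤ sin (2 * (U - θ)) * sin (2 * θ) :=
    sin_mul_sin_le_sin_mul_sin (by linarith) (by linarith) (by linarith)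
      (by linarith) (by linarith) (by linarith)
  have hsin := le_of_mul_le_mul_right (hε.trans (hs.trans hmono)) hz
  linarith [le_of_sin_le_sin (by linarith) (by linarith [pi_pos]) hsin]

lemma sub_cube_div_six_lt_sin {a t : ℝ} (ha : 0 < a) (hat : a ≤ t) (ht : t ≤ 1) :
    a - a ^ 3 / 6 < sin t := by
  have hmono : a - a ^ 3 / 6 ≤ t - t ^ 3 / 6 := by
    nlinarith [mul_nonneg (sub_nonneg.2 hat) (by nlinarith : (0 : ℝ) ≤ 6 - t ^ 2 - t * a - a ^ 2)]
  exact hmono.trans_lt (sin_gt_sub_cube (ha.trans_le hat))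

lemma cos_three_pi_div_seven_gt : (0.222 : ℝ) < cos (3 * π / 7) := by
  rw [show 3 * π / 7 = π / 2 - π / 14 by ring, cos_pi_div_two_sub]
  refine lt_of_le_of_lt ?_ (sub_cube_div_six_lt_sin (a := 3.14 / 14) (by norm_num) ?_ ?_)
  · norm_num
  all_goals linarith [pi_gt_d2, pi_lt_d2]

lemma cos_two_pi_div_seven_gt : (0.62 : ℝ) < cos (2 * π / 7) := by
  rw [show 2 * π / 7 = π / 2 - 3 * π / 14 by ring, cos_pi_div_two_sub]
  refine lt_of_le_of_lt ?_ (sub_cube_div_six_lt_sin (a := 3 * 3.14 / 14) (by norm_num) ?_ ?_)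
  · norm_num
  all_goals linarith [pi_gt_d2, pi_lt_d2]

lemma two_mul_sin_pi_div_21_mul_sin :
    2 * (sin (π / 21) * sin (8 * π / 21)) = 1 / 2 - cos (3 * π / 7) := by
  rw [← mul_assoc, two_mul_sin_mul_sin, show π / 21 - 8 * π / 21 = -(π / 3) by ring, cos_neg,
    cos_pi_div_three, show π / 21 + 8 * π / 21 = 3 * π / 7 by ring]

lemma sin_pi_div_21_mul_le_sin_pi_div_15_mul :
    sin (π / 21) * sin (8 * π / 21) ≤ sin (π / 15) * sin (4 * π / 15) := by
  have h := two_mul_sin_mul_sin (π / 15) (4 * π / 15)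
  rw [show π / 15 - 4 * π / 15 = -(π / 5) by ring, cos_neg, cos_pi_div_five,
    show π / 15 + 4 * π / 15 = π / 3 by ring, cos_pi_div_three] at h
  nlinarith [two_mul_sin_pi_div_21_mul_sin, cos_three_pi_div_seven_gt, Real.sqrt_nonneg 5,
    Real.sq_sqrt (show (0 : ℝ) ≤ 5 by norm_num)]

lemma sin_pi_div_21_mul_le_sin_two_pi_div_35_mul :
    sin (π / 21) * sin (8 * π / 21) ≤ sin (2 * π / 35) * sin (12 * π / 35) := by
  have h := two_mul_sin_mul_sin (2 * π / 35) (12 * π / 35)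
  have hcos : cos (2 * π / 5) = (√5 - 1) / 4 := by
    rw [show 2 * π / 5 = 2 * (π / 5) by ring, cos_two_mul, cos_pi_div_five]
    nlinarith [Real.sq_sqrt (show (0 : ℝ) ≤ 5 by norm_num)]
  rw [show 2 * π / 35 - 12 * π / 35 = -(2 * π / 7) by ring, cos_neg,
    show 2 * π / 35 + 12 * π / 35 = 2 * π / 5 by ring, hcos] at h
  nlinarith [two_mul_sin_pi_div_21_mul_sin, cos_three_pi_div_seven_gt, cos_two_pi_div_seven_gt,
    Real.sqrt_nonneg 5, Real.sq_sqrt (show (0 : ℝ) ≤ 5 by norm_num)]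

lemma sin_pi_div_21_mul_le_half : sin (π / 21) * sin (8 * π / 21) ≤ 1 / 2 := by
  nlinarith [two_mul_sin_pi_div_21_mul_sin, cos_three_pi_div_seven_gt]

lemma liesInSubdivisionCell_of_le_pi_div_four {θ ε : ℝ} (hεθ : ε ≤ θ)
    (hθ : θ ≤ π / 4) (hε : sin (2 * ε) * sin (2 * θ) ≤ sin (π / 21) * sin (8 * π / 21)) :
    LiesInSubdivisionCell {3, 5, 7} (Icc (θ - ε) (θ + ε)) := by
  have hπ := pi_pos
  rcases le_or_gt θ (π / 12) with h₁ | h₁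
  · refine ⟨3, by simp, 1, le_rfl, by norm_num, Icc_subset_Icc ?_ ?_⟩ <;> norm_num <;> linarith
  have hz : 0 < sin (2 * θ) := sin_pos_of_pos_of_lt_pi (by linarith) (by linarith)
  have hεπ : ε ≤ π / 4 := by linarith
  have hA := sin_pi_div_21_mul_le_sin_pi_div_15_mul
  have hB := sin_pi_div_21_mul_le_sin_two_pi_div_35_mul
  rcases le_or_gt θ (2 * π / 15) with h₂ | h₂
  · refine ⟨3, by simp, 1, le_rfl, by norm_num, Icc_subset_Icc ?_ ?_⟩ <;> norm_num
    · linarith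
    · refine add_le_of_sin_two_mul_mul_le (θ₁ := 2 * π / 15) hz hε hεπ (by linarith) h₂
        (by linarith) (by linarith) ?_
      convert hA using 3 <;> ring
  rcases le_or_gt θ (6 * π / 35) with h₃ | h₃
  · refine ⟨5, by simp, 2, by norm_num, by norm_num, Icc_subset_Icc ?_ ?_⟩ <;> norm_num
    · refine le_sub_of_sin_two_mul_mul_le (θ₀ := 2 * π / 15) hz hε hεπ (by linarith)
        (by linarith) h₂.le hθ ?_
      convert hA using 3 <;> ring
    · refine add_le_of_sin_two_mul_mul_le (θ₁ := 6 * π / 35) hz hε hεπ (by linarith) h₃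
        (by linarith) (by linarith) ?_
      convert hB using 3 <;> ring
  rcases le_or_gt θ (4 * π / 21) with h₄ | h₄
  · refine ⟨7, by simp, 3, by norm_num, by norm_num, Icc_subset_Icc ?_ ?_⟩ <;> norm_num
    · refine le_sub_of_sin_two_mul_mul_le (θ₀ := 6 * π / 35) hz hε hεπ (by linarith)
        (by linarith) h₃.le hθ ?_
      convert hB using 3 <;> ring
    · refine add_le_of_sin_two_mul_mul_le (θ₁ := 4 * π / 21) hz hε hεπ (by linarith) h₄
        (by linarith) (by linarith) ?_
      exact le_of_eq (by congr 2 <;> ring)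
  · refine ⟨3, by simp, 2, by norm_num, by norm_num, Icc_subset_Icc ?_ ?_⟩ <;> norm_num
    · refine le_sub_of_sin_two_mul_mul_le (θ₀ := 4 * π / 21) hz hε hεπ (by linarith)
        (by linarith) h₄.le hθ ?_
      exact le_of_eq (by congr 2 <;> ring)
    · refine add_le_of_sin_two_mul_mul_le (θ₁ := π / 4) hz hε hεπ (by linarith) hθ
        (by linarith) (by linarith) ?_
      rw [show 2 * (2 * π / 6 - π / 4) = π / 6 by ring, show 2 * (π / 4) = π / 2 by ring,
        sin_pi_div_six, sin_pi_div_two]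
      linarith [sin_pi_div_21_mul_le_half]

theorem interval_in_single_subdivision_general (θ εθ : ℝ)
    (hε0 : 0 ≤ εθ)
    (hε : εθ ≤ min (min
        (if Real.sin (2 * θ) = 0 then π / 2
          else (1 / 2) * Real.arcsin (Real.sin (π / 21) * Real.sin (8 * π / 21) / Real.sin (2 * θ)))
        (π / 2 - θ)) θ) :
    ∃ m ∈ ({3, 5, 7} : Set ℕ), ∃ p : ℕ, 1 ≤ p ∧ p ≤ m ∧
      Set.Icc (θ - εθ) (θ + εθ) ⊆
        Set.Icc (((p : ℝ) - 1) * π / (2 * m)) ((p : ℝ) * π / (2 * m)) := by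
  show LiesInSubdivisionCell {3, 5, 7} (Icc (θ - εθ) (θ + εθ))
  obtain ⟨⟨hεarcsin, hεθ'⟩, hεθ⟩ := le_min_iff.1 hε |>.imp_left le_min_iff.1
  have hprod : sin (2 * εθ) * sin (2 * θ) ≤ sin (π / 21) * sin (8 * π / 21) := by
    split_ifs at hεarcsin with hsin
    · rw [hsin, mul_zero]
      exact mul_nonneg (sin_nonneg_of_nonneg_of_le_pi (by positivity) (by linarith [pi_pos]))
        (sin_nonneg_of_nonneg_of_le_pi (by positivity) (by linarith [pi_pos]))
    · refine sin_two_mul_mul_le_of_le_arcsin (lt_of_le_of_ne ?_ (Ne.symm hsin)) hε0 hεarcsin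
      exact sin_nonneg_of_nonneg_of_le_pi (by linarith) (by linarith)
  rcases le_total θ (π / 4) with hθ | hθ
  · exact liesInSubdivisionCell_of_le_pi_div_four hεθ hθ hprod
  · have hsym : sin (2 * (π / 2 - θ)) = sin (2 * θ) := by
      rw [show 2 * (π / 2 - θ) = π - 2 * θ by ring, sin_pi_sub]
    have h := liesInSubdivisionCell_of_le_pi_div_four (θ := π / 2 - θ) hεθ' (by linarith)
      (hsym ▸ hprod)
    convert h.reflect using 2 <;> ring

theorem interval_in_single_subdivision (θ εθ : ℝ) (hθ0 : 0 ≤ θ) (hθ : θ ≤ π / 2)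
    (hε0 : 0 ≤ εθ)
    (hε : εθ ≤ min (min
        (if Real.sin (2 * θ) = 0 then π / 2
          else (1 / 2) * Real.arcsin (Real.sin (π / 21) * Real.sin (8 * π / 21) / Real.sin (2 * θ)))
        (π / 2 - θ)) θ) :
    ∃ m ∈ ({3, 5, 7} : Set ℕ), ∃ p : ℕ, 1 ≤ p ∧ p ≤ m ∧
      Set.Icc (θ - εθ) (θ + εθ) ⊆
        Set.Icc (((p : ℝ) - 1) * π / (2 * m)) ((p : ℝ) * π / (2 * m)) :=
  interval_in_single_subdivision_general θ εθ hε0 hε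
end

section
/- Let c = 1/(sin²(π/21)·sin²(8π/21)), K_max > 0, 0 < α_j ≤ 1/2, and let K₁ ≤ K₂ ≤ … ≤ K_t ≤ K_max satisfy K_i ≥ 2·K_{i-1} for i in a prefix of length T₁ and K_i ≥ 3·K_{i-1} thereafter. Then ∑_{i=1}^{t} c·K_i·ln(2q_i·K_max/((q_i - 1)·K_i·α_j)) < c·K_max·(3·ln 4 + (9/4)·ln 3 + (7/2)·ln(1/α_j)), where q_i = 2 for i ≤ T₁ and q_i = 3 for i > T₁. -/
/-!
Since `K` at least doubles at every step, `K i ≤ Kmax / 2 ^ (t - i)`. The `i`-th term is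
`c * Kmax * u * log (a / u)` with `u = K i / Kmax` and `a = 2 q / ((q - 1) α) ≥ 6 > e`; as
`u ↦ u * log (a / u)` increases on `(0, a / e]`, it is at most
`c * Kmax * (log a + (t - i) * log 2) / 2 ^ (t - i)` with `a ≤ 4 / α`. The geometric sums
`∑ 2⁻ʲ ≤ 2` and `∑ j 2⁻ʲ ≤ 2` then bound the total by `c * Kmax * (3 * log 4 + 2 * log (1 / α))`.
-/

open Real Finset

lemma mul_pow_sub_le_of_mul_le_succ {K : ℕ → ℝ} {r : ℝ} (hr : 0 ≤ r) {m n : ℕ} (hmn : m ≤ n)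
    (h : ∀ i, m ≤ i → i < n → r * K i ≤ K (i + 1)) : K m * r ^ (n - m) ≤ K n := by
  induction n, hmn using Nat.le_induction with
  | base => simp
  | succ n hmn ih =>
    calc K m * r ^ (n + 1 - m) = K m * r ^ (n - m) * r := by
          rw [Nat.sub_add_comm hmn, pow_succ, mul_assoc]
      _ ≤ K n * r := by gcongr; exact ih fun i hi hin => h i hi (by omega)
      _ ≤ K (n + 1) := by rw [mul_comm]; exact h n hmn (by omega)

lemma mul_log_div_le_mul_log_div {a x y : ℝ} (hx : 0 < x) (hxy : x ≤ y) (hya : exp 1 * y ≤ a) :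
    x * log (a / x) ≤ y * log (a / y) := by
  have hy : 0 < y := hx.trans_le hxy
  have ha : 0 < a := (mul_pos (exp_pos 1) hy).trans_le hya
  have hlog_ay : 1 ≤ log (a / y) := by
    rw [le_log_iff_exp_le (by positivity), le_div_iff₀ hy]; exact hya
  have hlog_yx : x * log (y / x) ≤ y - x := by
    have := mul_le_mul_of_nonneg_left (log_le_sub_one_of_pos (div_pos hy hx)) hx.le
    rwa [mul_sub, mul_div_cancel₀ _ hx.ne', mul_one] at this
  have hsplit : log (a / x) = log (a / y) + log (y / x) := by
    rw [← log_mul (by positivity) (by positivity), div_mul_div_cancel₀ hy.ne']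
  calc x * log (a / x) = x * log (a / y) + x * log (y / x) := by rw [hsplit, mul_add]
    _ ≤ x * log (a / y) + (y - x) * log (a / y) :=
        (add_le_add_iff_left _).2 (hlog_yx.trans (le_mul_of_one_le_right (by linarith) hlog_ay))
    _ = y * log (a / y) := by ring

lemma mul_log_mul_div_le {a K M r : ℝ} (n : ℕ) (ha : exp 1 ≤ a) (hK : 0 < K) (hr : 1 ≤ r)
    (hKM : K * r ^ n ≤ M) : K * log (a * M / K) ≤ M * (log (a * r ^ n) / r ^ n) := by
  have hrn : 1 ≤ r ^ n := one_le_pow₀ hr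
  have hM : 0 < M := (mul_pos hK (zero_lt_one.trans_le hrn)).trans_le hKM
  have key := mul_log_div_le_mul_log_div (a := a) (div_pos hK hM) (y := (r ^ n)⁻¹)
    (by rw [div_le_iff₀ hM, ← div_eq_inv_mul, le_div_iff₀ (by positivity)]; exact hKM)
    ((mul_le_of_le_one_right (exp_pos 1).le (inv_le_one_of_one_le₀ hrn)).trans ha)
  have h1 : a / (K / M) = a * M / K := by field_simp
  have h2 : a / (r ^ n)⁻¹ = a * r ^ n := by rw [div_inv_eq_mul]
  rw [h1, h2] at key
  calc K * log (a * M / K) = M * (K / M * log (a * M / K)) := by field_simp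
    _ ≤ M * ((r ^ n)⁻¹ * log (a * r ^ n)) := by gcongr
    _ = M * (log (a * r ^ n) / r ^ n) := by rw [inv_mul_eq_div]

lemma sum_log_mul_two_pow_div_two_pow_le {A : ℝ} (hA : 1 ≤ A) (n : ℕ) :
    ∑ j ∈ range n, log (A * 2 ^ j) / 2 ^ j ≤ 2 * log (2 * A) := by
  have hgeom_weighted : ∑ j ∈ range n, (j : ℝ) * (1 / 2) ^ j ≤ 2 := by
    have hsum := hasSum_coe_mul_geometric_of_norm_lt_one (𝕜 := ℝ) (r := 1 / 2) (by norm_num)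
    refine (sum_le_hasSum _ (fun i _ => by positivity) hsum).trans_eq ?_
    norm_num
  have hterm : ∀ j : ℕ,
      log (A * 2 ^ j) / 2 ^ j = log A * (1 / 2) ^ j + log 2 * (j * (1 / 2) ^ j) := by
    intro j
    rw [log_mul (by positivity) (by positivity), log_pow, one_div, inv_pow]
    ring
  simp only [hterm, sum_add_distrib, ← mul_sum]
  rw [log_mul two_ne_zero (by positivity)]
  linarith [mul_le_mul_of_nonneg_left (sum_geometric_two_le n) (log_nonneg hA),
    mul_le_mul_of_nonneg_left hgeom_weighted (log_nonneg one_le_two)]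

lemma sum_Icc_one_sub_eq_sum_range {M : Type*} [AddCommMonoid M] (f : ℕ → M) (t : ℕ) :
    ∑ i ∈ Icc 1 t, f (t - i) = ∑ j ∈ range t, f j := by
  rw [← Ico_add_one_right_eq_Icc, sum_Ico_reflect f 1 le_rfl, Nat.sub_self, Nat.add_sub_cancel,
    range_eq_Ico]

lemma mul_log_query_le {q K M α : ℝ} (n : ℕ) (hq : q = 2 ∨ q = 3) (hα0 : 0 < α) (hα : α ≤ 1 / 2)
    (hK : 0 < K) (hKM : K * 2 ^ n ≤ M) :
    K * log (2 * q * M / ((q - 1) * K * α)) ≤ M * (log (4 * (1 / α) * 2 ^ n) / 2 ^ n) := by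
  have hαinv : 2 ≤ 1 / α := by rw [le_div_iff₀ hα0]; linarith
  have hq1 : q - 1 ≠ 0 := by rcases hq with rfl | rfl <;> norm_num
  have ha : 3 ≤ 2 * q / (q - 1) ∧ 2 * q / (q - 1) ≤ 4 := by rcases hq with rfl | rfl <;> norm_num
  have harg : 2 * q * M / ((q - 1) * K * α) = 2 * q / (q - 1) * (1 / α) * M / K := by
    field_simp
  have he : exp 1 ≤ 2 * q / (q - 1) * (1 / α) :=
    exp_one_lt_d9.le.trans (by nlinarith)
  rw [harg]
  refine (mul_log_mul_div_le n he hK one_le_two hKM).trans ?_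
  gcongr
  exacts [(by positivity : (0 : ℝ) ≤ K * 2 ^ n).trans hKM,
    mul_pos ((exp_pos 1).trans_le he) (by positivity), ha.2]

lemma two_mul_le_succ_of_growth {K : ℕ → ℝ} {t T₁ : ℕ} (hpos : ∀ i, 1 ≤ i → i ≤ t → 0 < K i)
    (hgrow2 : ∀ i, 2 ≤ i → i ≤ T₁ → K i ≥ 2 * K (i - 1))
    (hgrow3 : ∀ i, T₁ < i → 2 ≤ i → i ≤ t → K i ≥ 3 * K (i - 1)) {i : ℕ} (hi : 1 ≤ i)
    (hit : i < t) : 2 * K i ≤ K (i + 1) := by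
  rcases le_or_gt (i + 1) T₁ with h | h
  · simpa using hgrow2 (i + 1) (by omega) h
  · have h3 := hgrow3 (i + 1) h (by omega) hit
    rw [Nat.add_sub_cancel] at h3
    linarith [hpos i hi hit.le]

theorem query_complexity_sum_bound_general (t T₁ : ℕ)
    (c Kmax αj : ℝ)
    (hc : c = 1 / (Real.sin (π / 21) ^ 2 * Real.sin (8 * π / 21) ^ 2))
    (hKmax : 0 < Kmax) (hα0 : 0 < αj) (hα : αj ≤ 1 / 2)
    (K : ℕ → ℝ) (hpos : ∀ i, 1 ≤ i → i ≤ t → 0 < K i)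
    (hle : ∀ i, 1 ≤ i → i ≤ t → K i ≤ Kmax)
    (hgrow2 : ∀ i, 2 ≤ i → i ≤ T₁ → K i ≥ 2 * K (i - 1))
    (hgrow3 : ∀ i, T₁ < i → 2 ≤ i → i ≤ t → K i ≥ 3 * K (i - 1))
    (q : ℕ → ℝ) (hq : ∀ i, q i = if i ≤ T₁ then 2 else 3) :
    ∑ i ∈ Finset.Icc 1 t,
        c * K i * Real.log (2 * q i * Kmax / ((q i - 1) * K i * αj)) <
      c * Kmax * (3 * Real.log 4 + (9 / 4) * Real.log 3 + (7 / 2) * Real.log (1 / αj)) := by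
  have hc0 : 0 < c := by
    have := pi_pos
    have := sin_pos_of_pos_of_lt_pi (x := π / 21) (by positivity) (by linarith)
    have := sin_pos_of_pos_of_lt_pi (x := 8 * π / 21) (by positivity) (by linarith)
    rw [hc]; positivity
  set f : ℕ → ℝ := fun j => log (4 * (1 / αj) * 2 ^ j) / 2 ^ j
  have hterm : ∀ i ∈ Icc 1 t,
      c * K i * log (2 * q i * Kmax / ((q i - 1) * K i * αj)) ≤ c * Kmax * f (t - i) := by
    intro i hi
    obtain ⟨hi1, hit⟩ := mem_Icc.1 hi
    have hqi : q i = 2 ∨ q i = 3 := by rw [hq i]; split_ifs <;> simp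
    have hdecay : K i * 2 ^ (t - i) ≤ Kmax :=
      (mul_pow_sub_le_of_mul_le_succ zero_le_two hit fun j hj hjt =>
        two_mul_le_succ_of_growth (i := j) hpos hgrow2 hgrow3 (by omega) hjt).trans
        (hle t (by omega) le_rfl)
    rw [mul_assoc c (K i), mul_assoc c Kmax]
    exact mul_le_mul_of_nonneg_left (mul_log_query_le _ hqi hα0 hα (hpos i hi1 hit) hdecay) hc0.le
  have hαinv : 2 ≤ 1 / αj := by rw [le_div_iff₀ hα0]; linarith
  calc _ ≤ ∑ i ∈ Icc 1 t, c * Kmax * f (t - i) := sum_le_sum hterm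
    _ = c * Kmax * ∑ j ∈ range t, f j := by rw [← mul_sum, sum_Icc_one_sub_eq_sum_range]
    _ ≤ c * Kmax * (2 * log (2 * (4 * (1 / αj)))) := by
        gcongr
        exact sum_log_mul_two_pow_div_two_pow_le (by linarith) t
    _ < _ := by
        gcongr
        rw [log_mul (by norm_num) (by positivity), log_mul (by norm_num) (by positivity),
          show (4 : ℝ) = 2 * 2 by norm_num, log_mul two_ne_zero two_ne_zero]
        have := log_pos (by norm_num : (1 : ℝ) < 3)
        have := log_pos (by linarith : (1 : ℝ) < 1 / αj)
        linarith

theorem query_complexity_sum_bound (t T₁ : ℕ) (ht : 1 ≤ t) (hT₁ : T₁ ≤ t)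
    (c Kmax αj : ℝ)
    (hc : c = 1 / (Real.sin (π / 21) ^ 2 * Real.sin (8 * π / 21) ^ 2))
    (hKmax : 0 < Kmax) (hα0 : 0 < αj) (hα : αj ≤ 1 / 2)
    (K : ℕ → ℝ) (hpos : ∀ i, 1 ≤ i → i ≤ t → 0 < K i)
    (hmono : ∀ i, 1 ≤ i → i + 1 ≤ t → K i ≤ K (i + 1))
    (hle : ∀ i, 1 ≤ i → i ≤ t → K i ≤ Kmax)
    (hgrow2 : ∀ i, 2 ≤ i → i ≤ T₁ → K i ≥ 2 * K (i - 1))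
    (hgrow3 : ∀ i, T₁ < i → 2 ≤ i → i ≤ t → K i ≥ 3 * K (i - 1))
    (q : ℕ → ℝ) (hq : ∀ i, q i = if i ≤ T₁ then 2 else 3) :
    ∑ i ∈ Finset.Icc 1 t,
        c * K i * Real.log (2 * q i * Kmax / ((q i - 1) * K i * αj)) <
      c * Kmax * (3 * Real.log 4 + (9 / 4) * Real.log 3 + (7 / 2) * Real.log (1 / αj)) :=
  query_complexity_sum_bound_general t T₁ c Kmax αj hc hKmax hα0 hα K hpos hle hgrow2 hgrow3 q hq
end
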